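/- arXiv:1209.3085 — 3 statements merged into one kernel-verified Lean document; each statement's English description precedes it below -/
import Mathlib

section
/- Let V and W be vector spaces over a field of characteristic different from 2, and let 𝔸 be the affine space underlying V (i.e., V acting on itself by translation). A map φ : 𝔸 → W satisfies φ(x+P+Q) + φ(x) = φ(x+P) + φ(x+Q) for all x ∈ 𝔸 and P, Q ∈ V if and only if it satisfies φ(x+P) + φ(x−P) = 2·φ(x) for all x ∈ 𝔸 and P ∈ V. -/
/-!
Specialising `Q = -P` gives the degenerate condition. Conversely, put `a = (P + Q)/2` and
`b = (P - Q)/2`: the degenerate condition at `x + a` applied to `a` and to `b` shows that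
`φ(x + P + Q) + φ(x)` and `φ(x + P) + φ(x + Q)` both equal `2 φ(x + a)`.
-/

section

variable {V W : Type*} [AddCommGroup V] [AddCommGroup W] {φ : V → W}

theorem add_add_sub_eq_two_zsmul_of_add_add
    (h : ∀ x P Q : V, φ (x + P + Q) + φ x = φ (x + P) + φ (x + Q)) (x P : V) :
    φ (x + P) + φ (x - P) = (2 : ℤ) • φ x := by
  have h' := h x P (-P)
  rw [add_neg_cancel_right] at h'
  rw [sub_eq_add_neg, ← h', two_smul]

theorem add_add_add_eq_add_add_sub_of_add_add_sub
    (h : ∀ x P : V, φ (x + P) + φ (x - P) = (2 : ℤ) • φ x) (x a b : V) :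
    φ (x + a + a) + φ x = φ (x + a + b) + φ (x + a - b) := by
  rw [h, ← h (x + a) a, add_sub_cancel_right]

end

theorem exists_add_self_eq_add_and_add_eq_and_sub_eq {K V : Type*} [DivisionRing K]
    [AddCommGroup V] [Module K V] (hchar : (2 : K) ≠ 0) (P Q : V) :
    ∃ a b : V, a + a = P + Q ∧ a + b = P ∧ a - b = Q := by
  have half_double (v : V) : (2 : K)⁻¹ • (v + v) = v := by
    rw [← two_smul K, smul_smul, inv_mul_cancel₀ hchar, one_smul]
  refine ⟨(2 : K)⁻¹ • (P + Q), (2 : K)⁻¹ • (P - Q), ?_, ?_, ?_⟩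
  · rw [← smul_add, half_double]
  · rw [← smul_add]; convert half_double P using 2; abel
  · rw [← smul_sub]; convert half_double Q using 2; abel

theorem statement0_general {K V W : Type*} [Field K] [AddCommGroup V] [Module K V]
    [AddCommGroup W] (hchar : (2 : K) ≠ 0) (φ : V → W) :
    (∀ x P Q : V, φ (x + P + Q) + φ x = φ (x + P) + φ (x + Q)) ↔
      ∀ x P : V, φ (x + P) + φ (x - P) = (2 : ℤ) • φ x := by
  refine ⟨add_add_sub_eq_two_zsmul_of_add_add, fun h x P Q => ?_⟩
  obtain ⟨a, b, hsum, hadd, hsub⟩ := exists_add_self_eq_add_and_add_eq_and_sub_eq hchar P Q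
  have hmid := add_add_add_eq_add_add_sub_of_add_add_sub h x a b
  rwa [add_assoc x a a, hsum, ← add_assoc, add_assoc x a b, hadd, add_sub_assoc, hsub] at hmid

/-- Let `V` and `W` be vector spaces over a field `K` of characteristic
different from `2`, and let `𝔸` be the affine space underlying `V` (identified with `V`
acting on itself by translation).  A map `φ : 𝔸 → W` satisfies the parallelogram condition
`φ(x+P+Q) + φ(x) = φ(x+P) + φ(x+Q)` for all `x ∈ 𝔸`, `P Q ∈ V` if and only if it satisfies
the degenerate parallelogram condition `φ(x+P) + φ(x−P) = 2·φ(x)` for all `x ∈ 𝔸`, `P ∈ V`. -/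
theorem statement0 {K V W : Type*} [Field K] [AddCommGroup V] [Module K V]
    [AddCommGroup W] [Module K W] (hchar : (2 : K) ≠ 0) (φ : V → W) :
    (∀ x P Q : V, φ (x + P + Q) + φ x = φ (x + P) + φ (x + Q)) ↔
      ∀ x P : V, φ (x + P) + φ (x - P) = (2 : ℤ) • φ x :=
  statement0_general hchar φ
end

section
/- Let K be a perfect field, p an odd prime invertible in K, E an elliptic curve over K, and X a K-torsor under E[p]. With E[p] identified with Hom(E[p], μ_p) via the Weil pairing P ↦ e_p(P, −), there is a short exact sequence of G_K-modules 1 → μ_p → Aff(X, μ_p) → E[p] → 0, where μ_p sits inside Aff(X, μ_p) as the constant maps and the surjection sends an affine map to (the Weil-pairing dual of) its linear part. -/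
/-!
Fix a base point `x₀ ∈ X`. The parallelogram law says exactly that the slope
`Q ↦ φ (Q +ᵥ x) / φ x` is a character of `E[p]` which does not depend on `x`; by the perfect
duality of the Weil pairing it is `e_p(P, -)` for a unique `P`, the linear part of `φ`. Maps with
trivial slope are constant, the map `x ↦ e_p(P, x -ᵥ x₀)` has linear part `P`, and the Galois
equivariance of the action on `X` and of `e_p` transports linear part `P` to linear part `σ • P`.
-/

/-- A map `φ : X → μ` from a torsor `X` under `Ep` to a commutative group `μ` is affine if
it satisfies the (multiplicative) parallelogram condition. -/
def IsAffMul {Ep X μ : Type*} [AddGroup Ep] [AddTorsor Ep X] [CommGroup μ]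
    (φ : X → μ) : Prop :=
  ∀ (x : X) (P Q : Ep), φ ((P + Q) +ᵥ x) * φ x = φ (P +ᵥ x) * φ (Q +ᵥ x)

theorem eq_const_of_apply_vadd_eq {Ep X β : Type*} [AddGroup Ep] [AddTorsor Ep X] {φ : X → β}
    (h : ∀ (x : X) (Q : Ep), φ (Q +ᵥ x) = φ x) (x₀ : X) : φ = Function.const X (φ x₀) :=
  funext fun x => by rw [← vsub_vadd x x₀, h]; rfl

namespace IsAffMul

variable {Ep X μ : Type*} [AddGroup Ep] [AddTorsor Ep X] [CommGroup μ] {φ : X → μ}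

theorem const (c : μ) : IsAffMul (Function.const X c) := fun _ _ _ => rfl

theorem of_apply_vadd_eq_mul (χ : Ep → μ) (hχ : ∀ a b : Ep, χ (a + b) = χ a * χ b)
    (h : ∀ (x : X) (Q : Ep), φ (Q +ᵥ x) = χ Q * φ x) : IsAffMul φ := by
  intro x P Q
  rw [h, h, h, hχ]
  ac_rfl

theorem div_apply_vadd_eq (hφ : IsAffMul φ) (Q : Ep) (x y : X) :
    φ (Q +ᵥ x) / φ x = φ (Q +ᵥ y) / φ y := by
  have h := hφ y Q (x -ᵥ y)
  rw [add_vadd, vsub_vadd] at h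
  exact div_eq_div_iff_mul_eq_mul.mpr h

theorem div_apply_vadd_add (hφ : IsAffMul φ) (x : X) (a b : Ep) :
    φ ((a + b) +ᵥ x) / φ x = φ (a +ᵥ x) / φ x * (φ (b +ᵥ x) / φ x) := by
  rw [div_mul_div_comm, ← hφ x a b, mul_div_mul_right_eq_div]

theorem existsUnique_linearPart (hφ : IsAffMul φ) (e : Ep → Ep → μ)
    (hdual : ∀ f : Ep → μ, (∀ a b : Ep, f (a + b) = f a * f b) →
      ∃! P : Ep, ∀ Q : Ep, f Q = e P Q) :
    ∃! P : Ep, ∀ (x : X) (Q : Ep), φ (Q +ᵥ x) = e P Q * φ x := by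
  obtain ⟨x₀⟩ : Nonempty X := AddTorsor.nonempty
  have slope_at_base : ∀ P : Ep, (∀ (x : X) (Q : Ep), φ (Q +ᵥ x) = e P Q * φ x) ↔
      ∀ Q : Ep, φ (Q +ᵥ x₀) / φ x₀ = e P Q := by
    intro P
    simp only [← div_eq_iff_eq_mul]
    exact ⟨fun h => h x₀, fun h x Q => hφ.div_apply_vadd_eq Q x x₀ ▸ h Q⟩
  simp only [slope_at_base]
  exact hdual _ (hφ.div_apply_vadd_add x₀)

end IsAffMul

theorem exists_isAffMul_of_map_add {Ep X μ : Type*} [AddGroup Ep] [AddTorsor Ep X] [CommGroup μ]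
    (χ : Ep → μ) (hχ : ∀ a b : Ep, χ (a + b) = χ a * χ b) :
    ∃ φ : X → μ, IsAffMul φ ∧ ∀ (x : X) (Q : Ep), φ (Q +ᵥ x) = χ Q * φ x := by
  obtain ⟨x₀⟩ : Nonempty X := AddTorsor.nonempty
  have hslope : ∀ (x : X) (Q : Ep), χ ((Q +ᵥ x) -ᵥ x₀) = χ Q * χ (x -ᵥ x₀) := by
    intro x Q
    rw [vadd_vsub_assoc, hχ]
  exact ⟨fun x => χ (x -ᵥ x₀), IsAffMul.of_apply_vadd_eq_mul χ hχ hslope, hslope⟩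

theorem smul_apply_inv_smul_vadd {G Ep X μ : Type*} [Group G] [AddGroup Ep]
    [DistribMulAction G Ep] [AddTorsor Ep X] [MulAction G X] [Monoid μ]
    [MulDistribMulAction G μ]
    (hcompat : ∀ (σ : G) (P : Ep) (x : X), σ • (P +ᵥ x) = (σ • P) +ᵥ (σ • x))
    {φ : X → μ} {χ : Ep → μ} (hχ : ∀ (x : X) (Q : Ep), φ (Q +ᵥ x) = χ Q * φ x)
    (σ : G) (x : X) (Q : Ep) :
    σ • φ (σ⁻¹ • (Q +ᵥ x)) = σ • χ (σ⁻¹ • Q) * σ • φ (σ⁻¹ • x) := by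
  rw [hcompat, hχ, smul_mul']

theorem statement13_general {G Ep X μ : Type*} [Group G]
    [AddCommGroup Ep] [DistribMulAction G Ep]
    [AddTorsor Ep X] [MulAction G X]
    [CommGroup μ] [MulDistribMulAction G μ]
    (hcompat : ∀ (σ : G) (P : Ep) (x : X), σ • (P +ᵥ x) = (σ • P) +ᵥ (σ • x))
    (e : Ep → Ep → μ)
    (hbil₂ : ∀ a b c : Ep, e a (b + c) = e a b * e a c)
    (hGal : ∀ (σ : G) (a b : Ep), σ • e a b = e (σ • a) (σ • b))
    (hdual : ∀ f : Ep → μ, (∀ a b : Ep, f (a + b) = f a * f b) →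
      ∃! P : Ep, ∀ Q : Ep, f Q = e P Q) :
    -- the constant maps are affine and `μ_p ↪ Aff(X, μ_p)` is injective
    ((∀ c : μ, IsAffMul (Function.const X c)) ∧
      Function.Injective fun c : μ => Function.const X c) ∧
    -- every affine map has a well-defined linear part, an element of `E[p]` via `e_p(P,−)`
    (∀ φ : X → μ, IsAffMul φ →
      ∃! P : Ep, ∀ (x : X) (Q : Ep), φ (Q +ᵥ x) = e P Q * φ x) ∧
    -- the projection to `E[p]` is surjective
    (∀ P : Ep, ∃ φ : X → μ, IsAffMul φ ∧ ∀ (x : X) (Q : Ep), φ (Q +ᵥ x) = e P Q * φ x) ∧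
    -- exactness in the middle: the affine maps with trivial linear part are the constants
    (∀ φ : X → μ, IsAffMul φ →
      ((∀ (x : X) (Q : Ep), φ (Q +ᵥ x) = φ x) ↔ ∃ c : μ, φ = Function.const X c)) ∧
    -- Galois equivariance of the projection
    (∀ (σ : G) (φ : X → μ) (P : Ep), IsAffMul φ →
      (∀ (x : X) (Q : Ep), φ (Q +ᵥ x) = e P Q * φ x) →
      IsAffMul (fun x : X => σ • φ (σ⁻¹ • x)) ∧
        ∀ (x : X) (Q : Ep),
          σ • φ (σ⁻¹ • (Q +ᵥ x)) = e (σ • P) Q * σ • φ (σ⁻¹ • x)) := by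
  obtain ⟨x₀⟩ : Nonempty X := AddTorsor.nonempty
  have twist : ∀ (σ : G) (φ : X → μ) (P : Ep),
      (∀ (x : X) (Q : Ep), φ (Q +ᵥ x) = e P Q * φ x) →
      ∀ (x : X) (Q : Ep),
        σ • φ (σ⁻¹ • (Q +ᵥ x)) = e (σ • P) Q * σ • φ (σ⁻¹ • x) := by
    intro σ φ P hP x Q
    rw [smul_apply_inv_smul_vadd hcompat hP, hGal, smul_inv_smul]
  refine ⟨⟨IsAffMul.const, fun a b hab => congrFun hab x₀⟩,
    fun φ hφ => hφ.existsUnique_linearPart e hdual,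
    fun P => exists_isAffMul_of_map_add (e P) (hbil₂ P),
    fun φ _ => ⟨fun h => ⟨φ x₀, eq_const_of_apply_vadd_eq h x₀⟩, ?_⟩,
    fun σ φ P _ hP =>
      ⟨IsAffMul.of_apply_vadd_eq_mul _ (hbil₂ _) (twist σ φ P hP), twist σ φ P hP⟩⟩
  rintro ⟨c, rfl⟩ x Q
  rfl

/-- Let `K` be a perfect field, `p` an odd prime invertible in `K`, `E`
an elliptic curve over `K` and `X` a `K`-torsor under `E[p]`.  Identifying `E[p]` with
`Hom(E[p], μ_p)` via the Weil pairing `P ↦ e_p(P,−)`, there is a short exact sequence of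
`G_K`-modules `1 → μ_p → Aff(X, μ_p) → E[p] → 0`, where `μ_p` sits inside `Aff(X,μ_p)` as
the constant maps and the surjection sends an affine map to the Weil-pairing dual of its
linear part; all maps are Galois equivariant.

Setup: `G = G_K`; `Ep = E[p]` and `μ = μ_p` are `G`-modules, `X` a torsor under `Ep` with
compatible `G`-action; `e` is the Weil pairing, assumed bilinear, Galois equivariant, and
a perfect duality (`hdual`). -/
theorem statement13 {G Ep X μ : Type*} [Group G]
    [AddCommGroup Ep] [DistribMulAction G Ep]
    [AddTorsor Ep X] [MulAction G X]
    [CommGroup μ] [MulDistribMulAction G μ]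
    (p : ℕ) (hp : p.Prime) (hodd : Odd p)
    (htorEp : ∀ P : Ep, p • P = 0) (htorμ : ∀ c : μ, c ^ p = 1)
    (hcompat : ∀ (σ : G) (P : Ep) (x : X), σ • (P +ᵥ x) = (σ • P) +ᵥ (σ • x))
    (e : Ep → Ep → μ)
    (hbil₁ : ∀ a b c : Ep, e (a + b) c = e a c * e b c)
    (hbil₂ : ∀ a b c : Ep, e a (b + c) = e a b * e a c)
    (hGal : ∀ (σ : G) (a b : Ep), σ • e a b = e (σ • a) (σ • b))
    (hdual : ∀ f : Ep → μ, (∀ a b : Ep, f (a + b) = f a * f b) →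
      ∃! P : Ep, ∀ Q : Ep, f Q = e P Q) :
    -- the constant maps are affine and `μ_p ↪ Aff(X, μ_p)` is injective
    ((∀ c : μ, IsAffMul (Function.const X c)) ∧
      Function.Injective fun c : μ => Function.const X c) ∧
    -- every affine map has a well-defined linear part, an element of `E[p]` via `e_p(P,−)`
    (∀ φ : X → μ, IsAffMul φ →
      ∃! P : Ep, ∀ (x : X) (Q : Ep), φ (Q +ᵥ x) = e P Q * φ x) ∧
    -- the projection to `E[p]` is surjective
    (∀ P : Ep, ∃ φ : X → μ, IsAffMul φ ∧ ∀ (x : X) (Q : Ep), φ (Q +ᵥ x) = e P Q * φ x) ∧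
    -- exactness in the middle: the affine maps with trivial linear part are the constants
    (∀ φ : X → μ, IsAffMul φ →
      ((∀ (x : X) (Q : Ep), φ (Q +ᵥ x) = φ x) ↔ ∃ c : μ, φ = Function.const X c)) ∧
    -- Galois equivariance of the projection
    (∀ (σ : G) (φ : X → μ) (P : Ep), IsAffMul φ →
      (∀ (x : X) (Q : Ep), φ (Q +ᵥ x) = e P Q * φ x) →
      IsAffMul (fun x : X => σ • φ (σ⁻¹ • x)) ∧
        ∀ (x : X) (Q : Ep),
          σ • φ (σ⁻¹ • (Q +ᵥ x)) = e (σ • P) Q * σ • φ (σ⁻¹ • x)) :=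
  statement13_general hcompat e hbil₂ hGal hdual
end

section
/- Let E be an elliptic curve over a perfect field K, p an odd prime invertible in K, X a torsor under E[p], and F̄ = Map(X, K̄). For fixed x₀ ∈ X and P ∈ E[p], the map φ_{P,x₀} : X → μ_p given by x ↦ e_p(P, x − x₀) is affine; its class in μ_p(F̄)/μ_p (maps to μ_p modulo constant maps) is independent of x₀; and the resulting assignment E[p] → μ_p(F̄)/μ_p is an injective group homomorphism. -/
/-!
Everything follows from the fact that `e P` is a character of `E[p]`: precomposing a character
with `x ↦ x − x₀` gives an affine map, and moving the base point from `x₀` to `x₁` multiplies it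
by the constant `e P (x₁ − x₀)`. Two such maps that agree up to a constant agree at `x₀`, where
both are `1`, so the characters coincide, and nondegeneracy of the pairing then gives `P = Q`.
-/

section TorsorCharacter

variable {Ep X μ : Type*} [AddCommGroup Ep] [AddTorsor Ep X] [CommGroup μ] {f g : Ep → μ}

theorem map_zero_of_map_add (hf : ∀ a b, f (a + b) = f a * f b) : f 0 = 1 := by
  simpa using (hf 0 0).symm

theorem isAffMul_comp_vsub (hf : ∀ a b, f (a + b) = f a * f b) (x₀ : X) :
    IsAffMul fun x : X => f (x -ᵥ x₀) := by
  intro x P Q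
  simp only [vadd_vsub_assoc, hf]
  ac_rfl

theorem comp_vsub_eq_mul_comp_vsub (hf : ∀ a b, f (a + b) = f a * f b) (x₀ x₁ x : X) :
    f (x -ᵥ x₀) = f (x₁ -ᵥ x₀) * f (x -ᵥ x₁) := by
  rw [← hf, add_comm, vsub_add_vsub_cancel]

theorem eq_of_comp_vsub_eq_const_mul (hf : ∀ a b, f (a + b) = f a * f b)
    (hg : ∀ a b, g (a + b) = g a * g b) {x₀ : X} {c : μ}
    (h : ∀ x : X, f (x -ᵥ x₀) = c * g (x -ᵥ x₀)) : f = g := by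
  have hc : c = 1 := by
    simpa [map_zero_of_map_add hf, map_zero_of_map_add hg] using (h x₀).symm
  funext a
  simpa [hc] using h (a +ᵥ x₀)

end TorsorCharacter

theorem eq_of_pairing_left_eq {Ep μ : Type*} [AddCommGroup Ep] [CommGroup μ] {e : Ep → Ep → μ}
    (hbil₁ : ∀ a b c : Ep, e (a + b) c = e a c * e b c)
    (hnd : ∀ P : Ep, (∀ Q : Ep, e P Q = 1) → P = 0) {P Q : Ep} (h : e P = e Q) : P = Q := by
  refine sub_eq_zero.mp (hnd _ fun R => ?_)
  have h' : e (P - Q) R * e Q R = e Q R := by rw [← hbil₁, sub_add_cancel, h]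
  exact mul_eq_right.mp h'

theorem statement14_general {Ep X μ : Type*}
    [AddCommGroup Ep] [AddTorsor Ep X] [CommGroup μ]
    (e : Ep → Ep → μ)
    (hbil₁ : ∀ a b c : Ep, e (a + b) c = e a c * e b c)
    (hbil₂ : ∀ a b c : Ep, e a (b + c) = e a b * e a c)
    (hnd : ∀ P : Ep, (∀ Q : Ep, e P Q = 1) → P = 0) :
    -- `φ_{P,x₀}` is affine
    (∀ (P : Ep) (x₀ : X), IsAffMul fun x : X => e P (x -ᵥ x₀)) ∧
    -- its class modulo constant maps does not depend on `x₀`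
    (∀ (P : Ep) (x₀ x₁ : X), ∃ c : μ, ∀ x : X, e P (x -ᵥ x₀) = c * e P (x -ᵥ x₁)) ∧
    -- the assignment `E[p] → μ_p(F̄)/μ_p` is a group homomorphism ...
    (∀ (P Q : Ep) (x₀ : X), ∃ c : μ, ∀ x : X,
      e (P + Q) (x -ᵥ x₀) = c * (e P (x -ᵥ x₀) * e Q (x -ᵥ x₀))) ∧
    -- ... and it is injective
    (∀ (P Q : Ep) (x₀ : X),
      (∃ c : μ, ∀ x : X, e P (x -ᵥ x₀) = c * e Q (x -ᵥ x₀)) → P = Q) :=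
  ⟨fun P x₀ => isAffMul_comp_vsub (hbil₂ P) x₀,
    fun P x₀ x₁ => ⟨e P (x₁ -ᵥ x₀), comp_vsub_eq_mul_comp_vsub (hbil₂ P) x₀ x₁⟩,
    fun P Q _ => ⟨1, fun x => by rw [hbil₁, one_mul]⟩,
    fun P Q _ ⟨_, hc⟩ =>
      eq_of_pairing_left_eq hbil₁ hnd (eq_of_comp_vsub_eq_const_mul (hbil₂ P) (hbil₂ Q) hc)⟩

/-- Let `E` be an elliptic curve over a perfect field `K`, `p` an odd
prime invertible in `K`, `X` a torsor under `E[p]`, and `F̄ = Map(X, K̄)` with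
`μ_p(F̄) = Map(X, μ_p)`.  For fixed `x₀ ∈ X` and `P ∈ E[p]`, the map
`φ_{P,x₀} : X → μ_p`, `x ↦ e_p(P, x − x₀)`, is affine; its class in `μ_p(F̄)/μ_p`
(maps modulo constant maps) is independent of `x₀`; and the resulting assignment
`E[p] → μ_p(F̄)/μ_p` is an injective group homomorphism.

Setup: `Ep = E[p]`, `μ = μ_p`, `X` a torsor under `Ep`; `x −ᵥ x₀ ∈ Ep` is the torsor
difference; `e` is the Weil pairing, bilinear and nondegenerate. -/
theorem statement14 {Ep X μ : Type*}
    [AddCommGroup Ep] [AddTorsor Ep X] [CommGroup μ]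
    (p : ℕ) (hp : p.Prime) (hodd : Odd p)
    (htorEp : ∀ P : Ep, p • P = 0) (htorμ : ∀ c : μ, c ^ p = 1)
    (e : Ep → Ep → μ)
    (hbil₁ : ∀ a b c : Ep, e (a + b) c = e a c * e b c)
    (hbil₂ : ∀ a b c : Ep, e a (b + c) = e a b * e a c)
    (hnd : ∀ P : Ep, (∀ Q : Ep, e P Q = 1) → P = 0) :
    -- `φ_{P,x₀}` is affine
    (∀ (P : Ep) (x₀ : X), IsAffMul fun x : X => e P (x -ᵥ x₀)) ∧
    -- its class modulo constant maps does not depend on `x₀`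
    (∀ (P : Ep) (x₀ x₁ : X), ∃ c : μ, ∀ x : X, e P (x -ᵥ x₀) = c * e P (x -ᵥ x₁)) ∧
    -- the assignment `E[p] → μ_p(F̄)/μ_p` is a group homomorphism ...
    (∀ (P Q : Ep) (x₀ : X), ∃ c : μ, ∀ x : X,
      e (P + Q) (x -ᵥ x₀) = c * (e P (x -ᵥ x₀) * e Q (x -ᵥ x₀))) ∧
    -- ... and it is injective
    (∀ (P Q : Ep) (x₀ : X),
      (∃ c : μ, ∀ x : X, e P (x -ᵥ x₀) = c * e Q (x -ᵥ x₀)) → P = Q) :=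
  statement14_general e hbil₁ hbil₂ hnd
end
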